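/- Let f and g be nonzero polynomials in two variables over ℂ (elements of MvPolynomial (Fin 2) ℂ), let w₁ ≤ w₂ be positive integers (weights on the two variables), and let k be a positive integer. Define the weighted multiplicity mult_w(h) of a nonzero polynomial h as the minimum of i·w₁ + j·w₂ over all exponent pairs (i, j) in the support of h. Suppose: (i) every exponent pair (i, j) in the support of f satisfies i + j ≥ k; (ii) some exponent pair (i, j) in the support of f satisfies i + j = k; (iii) mult_w(f)·mult_w(g) ≤ k²·w₁·w₂. Then mult_w(f) + mult_w(g) ≤ k·(w₁ + w₂). -/
import Mathlib


/-- The weighted multiplicity of a polynomial `h` in two variables with respect to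
weights `w₁, w₂`: the minimum of `i * w₁ + j * w₂` over all exponent pairs `(i, j)`
in the support of `h`. -/
noncomputable def multw (w₁ w₂ : ℕ) (h : MvPolynomial (Fin 2) ℂ) : ℕ :=
  sInf {n : ℕ | ∃ d ∈ h.support, n = d 0 * w₁ + d 1 * w₂}

theorem stmt_2 (f g : MvPolynomial (Fin 2) ℂ) (hf : f ≠ 0) (hg : g ≠ 0)
    (w₁ w₂ k : ℕ) (hw₁ : 0 < w₁) (hw : w₁ ≤ w₂) (hk : 0 < k)
    (hge : ∀ d ∈ f.support, k ≤ d 0 + d 1)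
    (heq : ∃ d ∈ f.support, d 0 + d 1 = k)
    (hmul : multw w₁ w₂ f * multw w₁ w₂ g ≤ k ^ 2 * w₁ * w₂) :
    multw w₁ w₂ f + multw w₁ w₂ g ≤ k * (w₁ + w₂) := by
  set a := multw w₁ w₂ f with ha
  set b := multw w₁ w₂ g with hb
  -- the defining set for f is nonempty
  have hne : {n : ℕ | ∃ d ∈ f.support, n = d 0 * w₁ + d 1 * w₂}.Nonempty := by
    obtain ⟨d, hd, _⟩ := heq
    exact ⟨d 0 * w₁ + d 1 * w₂, d, hd, rfl⟩
  -- lower bound: a ≥ k * w₁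
  have hlow : k * w₁ ≤ a := by
    obtain ⟨d, hd, hdv⟩ := Nat.sInf_mem hne
    have hk' := hge d hd
    calc k * w₁ ≤ (d 0 + d 1) * w₁ := Nat.mul_le_mul_right _ hk'
    _ = d 0 * w₁ + d 1 * w₁ := by ring
    _ ≤ d 0 * w₁ + d 1 * w₂ := by
        exact Nat.add_le_add_left (Nat.mul_le_mul_left _ hw) _
    _ = a := hdv.symm
  -- upper bound: a ≤ k * w₂
  have hhigh : a ≤ k * w₂ := by
    obtain ⟨d, hd, hdk⟩ := heq
    have hmem : d 0 * w₁ + d 1 * w₂ ∈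
        {n : ℕ | ∃ d ∈ f.support, n = d 0 * w₁ + d 1 * w₂} := ⟨d, hd, rfl⟩
    calc a ≤ d 0 * w₁ + d 1 * w₂ := Nat.sInf_le hmem
    _ ≤ d 0 * w₂ + d 1 * w₂ := by
        exact Nat.add_le_add_right (Nat.mul_le_mul_left _ hw) _
    _ = (d 0 + d 1) * w₂ := by ring
    _ = k * w₂ := by rw [hdk]
  have ha0 : 0 < a := lt_of_lt_of_le (Nat.mul_pos hk hw₁) hlow
  -- conclude: since k w₁ ≤ a ≤ k w₂ and a b ≤ k² w₁ w₂, we get a + b ≤ k (w₁ + w₂)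
  zify at *
  nlinarith [mul_nonneg (sub_nonneg.mpr hlow) (sub_nonneg.mpr hhigh)]
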